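/- arXiv:2107.11663 — 2 statements merged into one kernel-verified Lean document; each statement's English description precedes it below -/
import Mathlib

section
/- For every multivariate integer polynomial f in variables x_1, …, x_m, there exist multivariate integer polynomials g and h in 2m variables y_1, …, y_m, z_1, …, z_m such that: every coefficient of g and every coefficient of h is nonnegative and even; g − h equals the polynomial obtained from 2·f by substituting x_i ↦ y_i − z_i for each i; and f has a real zero if and only if there exist real numbers y_1, …, y_m, z_1, …, z_m, all strictly greater than 1, with g(y, z) = h(y, z). -/
/-!
Doubling `f` makes every coefficient of `F = 2 f(y - z)` even, and splitting each coefficient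
`c` of `F` as `c⁺ - c⁻` preserves evenness, so `g = F⁺` and `h = F⁻` have nonnegative even
coefficients and `g - h = F`. Since every real number is a difference of two reals greater
than `1`, the real zeros of `f` correspond exactly to points `y, z > 1` where `g = h`.
-/

open MvPolynomial

theorem Even.posPart {α : Type*} [AddGroup α] [LinearOrder α] {a : α} (ha : Even a) : Even a⁺ := by
  rcases le_total a 0 with h | h
  · simp [posPart_eq_zero.2 h]
  · rwa [posPart_eq_self.2 h]

theorem Even.negPart {α : Type*} [AddGroup α] [LinearOrder α] {a : α} (ha : Even a) : Even a⁻ := by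
  rw [← posPart_neg]
  exact ha.neg.posPart

theorem exists_lt_lt_sub_eq {α : Type*} [AddCommGroup α] [LinearOrder α] [IsOrderedAddMonoid α]
    [NoMaxOrder α] (c x : α) : ∃ y z, c < y ∧ c < z ∧ y - z = x := by
  obtain ⟨z, hz⟩ := exists_gt (max c (c - x))
  rw [max_lt_iff, sub_lt_iff_lt_add'] at hz
  exact ⟨x + z, z, hz.2, hz.1, add_sub_cancel_right x z⟩

theorem Pi.exists_lt_lt_sub_eq {ι α : Type*} [AddCommGroup α] [LinearOrder α]
    [IsOrderedAddMonoid α] [NoMaxOrder α] (c : α) (x : ι → α) :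
    ∃ y z : ι → α, (∀ i, c < y i) ∧ (∀ i, c < z i) ∧ y - z = x := by
  choose y z hy hz hyz using fun i => _root_.exists_lt_lt_sub_eq c (x i)
  exact ⟨y, z, hy, hz, funext hyz⟩

namespace MvPolynomial

variable {σ R : Type*}

theorem even_coeff_two_mul [CommSemiring R] (p : MvPolynomial σ R) (s : σ →₀ ℕ) :
    Even ((2 * p).coeff s) := by
  rw [two_mul, coeff_add]
  exact ⟨_, rfl⟩

variable [CommRing R]

theorem aeval_sumElim_aeval_X_sub_X {S : Type*} [CommRing S] [Algebra R S]
    (p : MvPolynomial σ R) (y z : σ → S) :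
    aeval (Sum.elim y z)
      (aeval (fun i => (X (Sum.inl i) - X (Sum.inr i) : MvPolynomial (σ ⊕ σ) R)) p) =
      aeval (y - z) p := by
  rw [comp_aeval_apply]
  simp only [map_sub, aeval_X, Sum.elim_inl, Sum.elim_inr]
  rfl

variable [Lattice R]

noncomputable def positivePart (p : MvPolynomial σ R) : MvPolynomial σ R :=
  AddMonoidAlgebra.ofCoeff ((AddMonoidAlgebra.coeff p).mapRange (·⁺) posPart_zero)

noncomputable def negativePart (p : MvPolynomial σ R) : MvPolynomial σ R :=
  AddMonoidAlgebra.ofCoeff ((AddMonoidAlgebra.coeff p).mapRange (·⁻) negPart_zero)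

@[simp]
theorem coeff_positivePart (p : MvPolynomial σ R) (s : σ →₀ ℕ) :
    (positivePart p).coeff s = (p.coeff s)⁺ := rfl

@[simp]
theorem coeff_negativePart (p : MvPolynomial σ R) (s : σ →₀ ℕ) :
    (negativePart p).coeff s = (p.coeff s)⁻ := rfl

variable [AddLeftMono R]

theorem positivePart_sub_negativePart (p : MvPolynomial σ R) :
    positivePart p - negativePart p = p := by
  ext s
  simp [posPart_sub_negPart]

theorem aeval_positivePart_eq_aeval_negativePart_iff {S : Type*} [CommRing S] [Algebra R S]
    (x : σ → S) (p : MvPolynomial σ R) :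
    aeval x (positivePart p) = aeval x (negativePart p) ↔ aeval x p = 0 := by
  rw [← sub_eq_zero, ← map_sub, positivePart_sub_negativePart]

end MvPolynomial

theorem exists_even_nonneg_split (m : ℕ) (f : MvPolynomial (Fin m) ℤ) :
    ∃ g h : MvPolynomial (Fin m ⊕ Fin m) ℤ,
      (∀ mono, 0 ≤ g.coeff mono ∧ Even (g.coeff mono)) ∧
      (∀ mono, 0 ≤ h.coeff mono ∧ Even (h.coeff mono)) ∧
      g - h =
        MvPolynomial.aeval
          (fun i => MvPolynomial.X (Sum.inl i) - MvPolynomial.X (Sum.inr i)) (2 * f) ∧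
      ((∃ x : Fin m → ℝ, MvPolynomial.aeval x f = 0) ↔
        (∃ y z : Fin m → ℝ, (∀ i, 1 < y i) ∧ (∀ i, 1 < z i) ∧
          MvPolynomial.aeval (Sum.elim y z) g = MvPolynomial.aeval (Sum.elim y z) h)) := by
  obtain ⟨F, hF⟩ : ∃ F : MvPolynomial (Fin m ⊕ Fin m) ℤ,
      F = aeval (fun i => X (Sum.inl i) - X (Sum.inr i)) (2 * f) := ⟨_, rfl⟩
  have hF_even (s) : Even (F.coeff s) := by
    rw [hF, map_mul, map_ofNat]
    exact even_coeff_two_mul _ s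
  refine ⟨positivePart F, negativePart F,
    fun s => ⟨posPart_nonneg _, (hF_even s).posPart⟩,
    fun s => ⟨negPart_nonneg _, (hF_even s).negPart⟩,
    (positivePart_sub_negativePart F).trans hF, ?_⟩
  have h_zero (y z : Fin m → ℝ) : aeval (Sum.elim y z) F = 0 ↔ aeval (y - z) f = 0 := by
    rw [hF, aeval_sumElim_aeval_X_sub_X, map_mul, map_ofNat, mul_eq_zero]
    simp only [two_ne_zero, false_or]
  simp_rw [aeval_positivePart_eq_aeval_negativePart_iff, h_zero]
  constructor
  · rintro ⟨x, hx⟩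
    obtain ⟨y, z, hy, hz, rfl⟩ := Pi.exists_lt_lt_sub_eq 1 x
    exact ⟨y, z, hy, hz, hx⟩
  · rintro ⟨y, z, -, -, hyz⟩
    exact ⟨y - z, hyz⟩
end

section
/- For every real algebraic number α there exist n ∈ ℕ and an integer polynomial p in 1 + n variables x, y_1, …, y_n such that the set of real numbers x for which there exist reals y_1, …, y_n with p(x, y_1, …, y_n) = 0 is exactly the singleton {α}. -/
/-!
An algebraic `α` is a root of a nonzero `Q ∈ ℤ[X]`, whose finitely many real roots leave a gap
around `α`. For `m` large the window `⌊m α⌋ / m ≤ x ≤ (⌊m α⌋ + 1) / m` lies in that gap, and the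
window condition is encoded by a slack variable: with `t = m x - ⌊m α⌋`, the inequality
`0 ≤ t (1 - t)` holds iff `t (1 - t) = y²` for some real `y`. Over `ℝ` the two equations
`Q(x) = 0` and `t (1 - t) - y² = 0` combine into one by summing squares.
-/

open MvPolynomial

theorem Set.Finite.exists_pos_forall_eq_of_dist_lt {X : Type*} [MetricSpace X] {s : Set X}
    (hs : s.Finite) (a : X) : ∃ ε > 0, ∀ x ∈ s, dist x a < ε → x = a := by
  obtain ⟨ε, hε, hball⟩ :=
    Metric.isOpen_iff.mp (hs.sdiff (t := {a})).isClosed.isOpen_compl a (by simp)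
  exact ⟨ε, hε, fun x hx hxa => by_contra fun hne => hball hxa ⟨hx, hne⟩⟩

theorem mul_one_sub_nonneg_iff {R : Type*} [Ring R] [LinearOrder R] [IsStrictOrderedRing R]
    {t : R} : 0 ≤ t * (1 - t) ↔ t ∈ Set.Icc 0 1 := by
  rw [mul_nonneg_iff, sub_nonneg, sub_nonpos, Set.mem_Icc]
  constructor
  · rintro (h | ⟨ht0, ht1⟩)
    · exact h
    · exact absurd (ht1.trans ht0) (not_le.mpr one_pos)
  · exact Or.inl

theorem Int.self_sub_floor_mem_Icc {R : Type*} [Ring R] [LinearOrder R] [IsStrictOrderedRing R]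
    [FloorRing R] (a : R) : a - ⌊a⌋ ∈ Set.Icc 0 1 := by
  rw [Int.self_sub_floor]
  exact ⟨Int.fract_nonneg a, (Int.fract_lt_one a).le⟩

theorem abs_sub_le_of_sub_floor_mem_Icc {r x α : ℝ} (hr : 0 < r)
    (hx : r * x - ⌊r * α⌋ ∈ Set.Icc 0 1) : |x - α| ≤ 1 / r := by
  have hα := Int.self_sub_floor_mem_Icc (r * α)
  rw [le_div_iff₀ hr, ← abs_of_pos hr, ← abs_mul, abs_le]
  constructor <;> nlinarith [hx.1, hx.2, hα.1, hα.2]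

/-- With `t = m X₀ - k`, the variable `X₁` is a slack witnessing `0 ≤ t (1 - t)`. -/
noncomputable def rootInWindowPoly (Q : Polynomial ℤ) (m : ℕ) (k : ℤ) : MvPolynomial (Fin 2) ℤ :=
  let t : MvPolynomial (Fin 2) ℤ := (m : MvPolynomial (Fin 2) ℤ) * X 0 - C k
  let s : MvPolynomial (Fin 2) ℤ := t * (1 - t) - X 1 * X 1
  Polynomial.aeval (X 0) Q * Polynomial.aeval (X 0) Q + s * s

theorem aeval_rootInWindowPoly (Q : Polynomial ℤ) (m : ℕ) (k : ℤ) (x : ℝ) (y : Fin 1 → ℝ) :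
    aeval (Fin.cons x y) (rootInWindowPoly Q m k) =
      Polynomial.aeval x Q * Polynomial.aeval x Q +
        ((m * x - k) * (1 - (m * x - k)) - y 0 * y 0) *
          ((m * x - k) * (1 - (m * x - k)) - y 0 * y 0) := by
  simp [rootInWindowPoly, ← Polynomial.aeval_algHom_apply]

theorem exists_aeval_rootInWindowPoly_eq_zero_iff (Q : Polynomial ℤ) (m : ℕ) (k : ℤ) (x : ℝ) :
    (∃ y : Fin 1 → ℝ, aeval (Fin.cons x y) (rootInWindowPoly Q m k) = 0) ↔
      Polynomial.aeval x Q = 0 ∧ m * x - k ∈ Set.Icc 0 1 := by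
  simp only [aeval_rootInWindowPoly, mul_self_add_mul_self_eq_zero, sub_eq_zero, exists_and_left,
    ← mul_one_sub_nonneg_iff, ← Real.isSquare_iff]
  exact and_congr_right fun _ => ⟨fun ⟨y, hy⟩ => ⟨y 0, hy⟩, fun ⟨r, hr⟩ => ⟨fun _ => r, hr⟩⟩

theorem algebraic_number_as_unique_solution (α : ℝ) (hα : IsAlgebraic ℚ α) :
    ∃ (n : ℕ) (p : MvPolynomial (Fin (n + 1)) ℤ),
      {x : ℝ | ∃ y : Fin n → ℝ, MvPolynomial.aeval (Fin.cons x y) p = 0} = {α} := by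
  obtain ⟨Q, hQ0, hQα⟩ := (IsFractionRing.isAlgebraic_iff ℤ ℚ ℝ).mpr hα
  obtain ⟨ε, hε, hisolated⟩ := (Q.rootSet_finite ℝ).exists_pos_forall_eq_of_dist_lt α
  obtain ⟨m, hm⟩ := exists_nat_one_div_lt hε
  refine ⟨1, rootInWindowPoly Q (m + 1) ⌊(m + 1 : ℝ) * α⌋,
    Set.eq_singleton_iff_unique_mem.mpr ⟨?_, ?_⟩⟩
  · refine (exists_aeval_rootInWindowPoly_eq_zero_iff ..).mpr ⟨hQα, ?_⟩
    exact_mod_cast Int.self_sub_floor_mem_Icc _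
  · intro x hx
    obtain ⟨hQx, hwindow⟩ := (exists_aeval_rootInWindowPoly_eq_zero_iff ..).mp hx
    push_cast at hwindow
    refine hisolated x (Polynomial.mem_rootSet.mpr ⟨hQ0, hQx⟩) ?_
    exact (abs_sub_le_of_sub_floor_mem_Icc (by positivity) hwindow).trans_lt hm
end
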